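/- Let E be a real Banach space and 1 ≤ q ≤ p < ∞. Then (H_{p,q}[E], ‖·‖_{p,q}) is complete: every Cauchy sequence in H_{p,q}[E] with respect to ‖·‖_{p,q} converges in ‖·‖_{p,q} to an element of H_{p,q}[E]. -/

import Mathlib

/-!
A single functional `φ` with `‖φ‖ ≤ 1` is a family of weak `q`-norm at most one, so by positive
homogeneity `|f φ| ≤ ‖φ‖ ‖f‖_{p,q}`. Hence a `‖·‖_{p,q}`-Cauchy sequence converges pointwise, and
the pointwise limit is again positively homogeneous. Since `‖·‖_{p,q}` is a supremum of finite
`ℓ^p`-sums, it is lower semicontinuous under pointwise convergence; this Fatou-type property, with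
Minkowski's inequality, gives both that the limit lies in `H_{p,q}[E]` and norm convergence.
-/

open scoped ENNReal

/-- A function `f : E* → ℝ` is positively homogeneous. -/
def PosHomog {E : Type*} [NormedAddCommGroup E] [NormedSpace ℝ E]
    (f : (E →L[ℝ] ℝ) → ℝ) : Prop :=
  ∀ (c : ℝ), 0 ≤ c → ∀ φ : E →L[ℝ] ℝ, f (c • φ) = c * f φ

/-- The weak `q`-summing norm of a finite family in `E*`. -/
noncomputable def weakSumNorm {E : Type*} [NormedAddCommGroup E] [NormedSpace ℝ E]
    (q : ℝ) {n : ℕ} (xs : Fin n → (E →L[ℝ] ℝ)) : ℝ :=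
  sSup ((fun x : E => (∑ k, |xs k x| ^ q) ^ (1 / q)) '' Metric.closedBall 0 1)

/-- The `(p,q)`-summing norm of `f : E* → ℝ`, with values in `[0,∞]`. -/
noncomputable def pqNorm {E : Type*} [NormedAddCommGroup E] [NormedSpace ℝ E]
    (p q : ℝ) (f : (E →L[ℝ] ℝ) → ℝ) : ℝ≥0∞ :=
  ⨆ (n : ℕ) (xs : Fin n → (E →L[ℝ] ℝ)) (_ : weakSumNorm q xs ≤ 1),
    ENNReal.ofReal ((∑ k, |f (xs k)| ^ p) ^ (1 / p))

open Filter Topology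

namespace PosHomog

variable {E : Type*} [NormedAddCommGroup E] [NormedSpace ℝ E] {f g : (E →L[ℝ] ℝ) → ℝ}

theorem map_zero (hf : PosHomog f) : f 0 = 0 := by
  simpa using hf 0 le_rfl 0

theorem sub (hf : PosHomog f) (hg : PosHomog g) : PosHomog (f - g) := by
  intro c hc φ
  simp only [Pi.sub_apply, hf c hc φ, hg c hc φ, mul_sub]

theorem of_tendsto {F : ℕ → (E →L[ℝ] ℝ) → ℝ} (hF : ∀ j, PosHomog (F j))
    (hlim : ∀ φ, Tendsto (fun j => F j φ) atTop (𝓝 (g φ))) : PosHomog g := by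
  intro c hc φ
  refine tendsto_nhds_unique (hlim (c • φ)) ?_
  simpa only [hF _ c hc φ] using (hlim φ).const_mul c

end PosHomog

section pqNorm

variable {E : Type*} [NormedAddCommGroup E] [NormedSpace ℝ E] {p q : ℝ}

theorem ofReal_le_pqNorm (f : (E →L[ℝ] ℝ) → ℝ) {n : ℕ} {xs : Fin n → (E →L[ℝ] ℝ)}
    (hxs : weakSumNorm q xs ≤ 1) :
    ENNReal.ofReal ((∑ k, |f (xs k)| ^ p) ^ (1 / p)) ≤ pqNorm p q f :=
  le_iSup_of_le n (le_iSup_of_le xs (le_iSup_of_le hxs le_rfl))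

theorem weakSumNorm_single_le (hq : q ≠ 0) (φ : E →L[ℝ] ℝ) : weakSumNorm q ![φ] ≤ ‖φ‖ := by
  refine Real.sSup_le ?_ (norm_nonneg φ)
  rintro _ ⟨x, hx, rfl⟩
  simp only [Fin.sum_univ_one, Matrix.cons_val_zero]
  rw [one_div, Real.rpow_rpow_inv (abs_nonneg _) hq]
  calc |φ x| ≤ ‖φ‖ * ‖x‖ := φ.le_opNorm x
    _ ≤ ‖φ‖ := mul_le_of_le_one_right (norm_nonneg φ) (mem_closedBall_zero_iff.mp hx)

theorem abs_le_of_pqNorm_le (hp : p ≠ 0) (hq : q ≠ 0) {f : (E →L[ℝ] ℝ) → ℝ} (hf : PosHomog f)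
    {C : ℝ} (hC : 0 ≤ C) (hfC : pqNorm p q f ≤ ENNReal.ofReal C) (φ : E →L[ℝ] ℝ) :
    |f φ| ≤ ‖φ‖ * C := by
  rcases eq_or_ne φ 0 with rfl | hφ
  · simp [hf.map_zero]
  have hφpos : 0 < ‖φ‖ := norm_pos_iff.mpr hφ
  set ψ := ‖φ‖⁻¹ • φ
  have hψ : ‖ψ‖ ≤ 1 := by
    rw [norm_smul, norm_inv, norm_norm, inv_mul_cancel₀ hφpos.ne']
  have hfψ : |f ψ| ≤ C := by
    have h := ofReal_le_pqNorm (p := p) f ((weakSumNorm_single_le hq ψ).trans hψ)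
    rw [Fin.sum_univ_one, Matrix.cons_val_zero, one_div,
      Real.rpow_rpow_inv (abs_nonneg _) hp] at h
    exact (ENNReal.ofReal_le_ofReal_iff hC).mp (h.trans hfC)
  have hfφ : f φ = ‖φ‖ * f ψ := by
    rw [← hf _ (norm_nonneg φ), smul_smul, mul_inv_cancel₀ hφpos.ne', one_smul]
  rw [hfφ, abs_mul, abs_norm]
  exact mul_le_mul_of_nonneg_left hfψ (norm_nonneg φ)

theorem cauchySeq_apply_of_pqNorm (hp : p ≠ 0) (hq : q ≠ 0) {F : ℕ → (E →L[ℝ] ℝ) → ℝ}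
    (hF : ∀ j, PosHomog (F j))
    (hcauchy : ∀ ε : ℝ, 0 < ε → ∃ N : ℕ, ∀ j ≥ N, ∀ k ≥ N,
      pqNorm p q (F j - F k) ≤ ENNReal.ofReal ε)
    (φ : E →L[ℝ] ℝ) : CauchySeq fun j => F j φ := by
  refine Metric.cauchySeq_iff.mpr fun ε hε => ?_
  have hδ : 0 < ε / (‖φ‖ + 1) := by positivity
  obtain ⟨N, hN⟩ := hcauchy _ hδ
  refine ⟨N, fun j hj k hk => ?_⟩
  calc dist (F j φ) (F k φ) = |(F j - F k) φ| := Real.dist_eq _ _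
    _ ≤ ‖φ‖ * (ε / (‖φ‖ + 1)) :=
        abs_le_of_pqNorm_le hp hq ((hF j).sub (hF k)) hδ.le (hN j hj k hk) φ
    _ < (‖φ‖ + 1) * (ε / (‖φ‖ + 1)) := by gcongr; exact lt_add_one _
    _ = ε := by field_simp

theorem pqNorm_sub_le (hp : 1 ≤ p) (f g : (E →L[ℝ] ℝ) → ℝ) :
    pqNorm p q (f - g) ≤ pqNorm p q f + pqNorm p q g := by
  refine iSup_le fun n => iSup_le fun xs => iSup_le fun hxs => ?_
  have hmink : (∑ i, |f (xs i) - g (xs i)| ^ p) ^ (1 / p) ≤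
      (∑ i, |f (xs i)| ^ p) ^ (1 / p) + (∑ i, |g (xs i)| ^ p) ^ (1 / p) := by
    simpa only [← sub_eq_add_neg, abs_neg] using
      Real.Lp_add_le Finset.univ (fun i => f (xs i)) (fun i => -g (xs i)) hp
  calc ENNReal.ofReal ((∑ i, |(f - g) (xs i)| ^ p) ^ (1 / p))
      ≤ ENNReal.ofReal ((∑ i, |f (xs i)| ^ p) ^ (1 / p)) +
          ENNReal.ofReal ((∑ i, |g (xs i)| ^ p) ^ (1 / p)) :=
        (ENNReal.ofReal_le_ofReal hmink).trans ENNReal.ofReal_add_le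
    _ ≤ pqNorm p q f + pqNorm p q g :=
        add_le_add (ofReal_le_pqNorm f hxs) (ofReal_le_pqNorm g hxs)

theorem pqNorm_le_of_tendsto (hp : 0 ≤ p) {F : ℕ → (E →L[ℝ] ℝ) → ℝ} {G : (E →L[ℝ] ℝ) → ℝ}
    (hlim : ∀ φ, Tendsto (fun k => F k φ) atTop (𝓝 (G φ))) {C : ℝ≥0∞}
    (hC : ∀ᶠ k in atTop, pqNorm p q (F k) ≤ C) : pqNorm p q G ≤ C := by
  refine iSup_le fun n => iSup_le fun xs => iSup_le fun hxs => ?_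
  have hsum : Tendsto (fun k => ENNReal.ofReal ((∑ i, |F k (xs i)| ^ p) ^ (1 / p))) atTop
      (𝓝 (ENNReal.ofReal ((∑ i, |G (xs i)| ^ p) ^ (1 / p)))) :=
    ENNReal.continuous_ofReal.continuousAt.tendsto.comp <|
      (tendsto_finsetSum _ fun i _ => ((hlim (xs i)).abs.rpow_const (Or.inr hp))).rpow_const
        (Or.inr (by positivity))
  exact le_of_tendsto hsum (hC.mono fun k hk => (ofReal_le_pqNorm (F k) hxs).trans hk)

end pqNorm

theorem Hpq_complete
    (E : Type*) [NormedAddCommGroup E] [NormedSpace ℝ E]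
    (p q : ℝ) (hq : 1 ≤ q) (hqp : q ≤ p)
    (f : ℕ → (E →L[ℝ] ℝ) → ℝ)
    (hmem : ∀ j, PosHomog (f j) ∧ pqNorm p q (f j) < ⊤)
    (hcauchy : ∀ ε : ℝ, 0 < ε → ∃ N : ℕ, ∀ j ≥ N, ∀ k ≥ N,
      pqNorm p q (fun φ => f j φ - f k φ) < ENNReal.ofReal ε) :
    ∃ g : (E →L[ℝ] ℝ) → ℝ, PosHomog g ∧ pqNorm p q g < ⊤ ∧
      ∀ ε : ℝ, 0 < ε → ∃ N : ℕ, ∀ j ≥ N,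
        pqNorm p q (fun φ => f j φ - g φ) < ENNReal.ofReal ε := by
  have hp : 1 ≤ p := hq.trans hqp
  have hcauchy_le : ∀ ε : ℝ, 0 < ε → ∃ N : ℕ, ∀ j ≥ N, ∀ k ≥ N,
      pqNorm p q (f j - f k) ≤ ENNReal.ofReal ε :=
    fun ε hε => (hcauchy ε hε).imp fun N hN j hj k hk => (hN j hj k hk).le
  have hpt : ∀ φ, CauchySeq fun j => f j φ :=
    cauchySeq_apply_of_pqNorm (by linarith) (by linarith) (fun j => (hmem j).1) hcauchy_le
  choose g hg using fun φ => cauchySeq_tendsto_of_complete (hpt φ)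
  have hclose : ∀ ε : ℝ, 0 < ε → ∃ N : ℕ, ∀ j ≥ N, pqNorm p q (f j - g) ≤ ENNReal.ofReal ε := by
    intro ε hε
    obtain ⟨N, hN⟩ := hcauchy_le ε hε
    exact ⟨N, fun j hj => pqNorm_le_of_tendsto (by linarith)
      (fun φ => (hg φ).const_sub (f j φ)) (eventually_atTop.mpr ⟨N, hN j hj⟩)⟩
  refine ⟨g, PosHomog.of_tendsto (fun j => (hmem j).1) hg, ?_, fun ε hε => ?_⟩
  · obtain ⟨N, hN⟩ := hclose 1 one_pos
    calc pqNorm p q g = pqNorm p q (f N - (f N - g)) := by rw [sub_sub_cancel]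
      _ ≤ pqNorm p q (f N) + pqNorm p q (f N - g) := pqNorm_sub_le hp _ _
      _ < ⊤ := ENNReal.add_lt_top.mpr
          ⟨(hmem N).2, (hN N le_rfl).trans_lt ENNReal.ofReal_lt_top⟩
  · obtain ⟨N, hN⟩ := hclose (ε / 2) (half_pos hε)
    exact ⟨N, fun j hj =>
      (hN j hj).trans_lt ((ENNReal.ofReal_lt_ofReal_iff hε).mpr (half_lt_self hε))⟩
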